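/- Let G = (V,E) be a simple connected undirected graph containing a vertex i* adjacent to all other vertices, and let the maximum degree among vertices in V∖{i*} be Δ_max. Then every eigenvalue of the reduced Laplacian L(i*) (the Laplacian of G with the row and column of i* deleted) lies in the interval [1, 2Δ_max − 1]. -/

import Mathlib

/-!
Gershgorin's circle theorem applied to a row `k` of the reduced Laplacian `L(i*)`: the diagonal
entry is `deg k` and the off-diagonal row sum counts the neighbours of `k` other than `i*`, which
is `deg k - 1` because `i*` is adjacent to `k`. So every eigenvalue lies within `deg k - 1` of
`deg k`, i.e. in `[1, 2 deg k - 1] ⊆ [1, 2 Δ_max - 1]`.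
-/

open Matrix Finset

namespace SimpleGraph

variable {V : Type*} [Fintype V] [DecidableEq V] (G : SimpleGraph V) [DecidableRel G.Adj]

theorem lapMatrix_apply_self (R : Type*) [AddGroupWithOne R] (v : V) :
    G.lapMatrix R v v = G.degree v := by
  simp [lapMatrix, degMatrix]

theorem norm_lapMatrix_apply_of_ne {v w : V} (h : v ≠ w) :
    ‖G.lapMatrix ℝ v w‖ = if G.Adj v w then 1 else 0 := by
  by_cases hadj : G.Adj v w <;> simp [lapMatrix, degMatrix, h, hadj]

theorem sum_norm_lapMatrix_submatrix_erase (p : V → Prop) [DecidablePred p] (k : Subtype p) :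
    ∑ j ∈ univ.erase k, ‖(G.lapMatrix ℝ).submatrix Subtype.val Subtype.val k j‖ =
      #{w ∈ G.neighborFinset k | p w} := by
  have hterm : ∀ j ∈ univ.erase k,
      ‖(G.lapMatrix ℝ).submatrix Subtype.val Subtype.val k j‖ =
        if G.Adj k j then 1 else 0 := fun j hj =>
    G.norm_lapMatrix_apply_of_ne fun h => (mem_erase.mp hj).1 (Subtype.ext h).symm
  rw [sum_congr rfl hterm, sum_erase _ (by simp),
    ← sum_subtype {w | p w} (by simp) fun w => if G.Adj k w then (1 : ℝ) else 0,
    sum_boole, filter_filter]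
  congr 2
  ext w
  simp [and_comm]

theorem exists_abs_sub_degree_le_of_hasEigenvalue_lapMatrix_submatrix
    (p : V → Prop) [DecidablePred p] {μ : ℝ}
    (hμ : Module.End.HasEigenvalue
      (toLin' ((G.lapMatrix ℝ).submatrix (Subtype.val : Subtype p → V) Subtype.val)) μ) :
    ∃ k, p k ∧ |μ - G.degree k| ≤ #{w ∈ G.neighborFinset k | p w} := by
  obtain ⟨k, hk⟩ := eigenvalue_mem_ball hμ
  rw [sum_norm_lapMatrix_submatrix_erase, submatrix_apply, lapMatrix_apply_self,
    Metric.mem_closedBall, Real.dist_eq] at hk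
  exact ⟨k, k.2, hk⟩

theorem card_filter_neighborFinset_ne_add_one {v i : V} (h : G.Adj v i) :
    #{w ∈ G.neighborFinset v | w ≠ i} + 1 = G.degree v := by
  rw [filter_ne', card_erase_add_one (by simpa using h), card_neighborFinset_eq_degree]

end SimpleGraph

theorem reduced_laplacian_eigenvalue_bounds_general
    {V : Type*} [Fintype V] [DecidableEq V]
    (G : SimpleGraph V) [DecidableRel G.Adj]
    (istar : V) (hstar : ∀ v : V, v ≠ istar → G.Adj istar v)
    (Δmax : ℕ)
    (hΔub : ∀ v : V, v ≠ istar → G.degree v ≤ Δmax) :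
    ∀ μ : ℝ,
      Module.End.HasEigenvalue
        (Matrix.toLin'
          ((G.lapMatrix ℝ).submatrix
            (fun v : {v : V // v ≠ istar} => (v : V))
            (fun v : {v : V // v ≠ istar} => (v : V)))) μ →
      μ ∈ Set.Icc (1 : ℝ) (2 * (Δmax : ℝ) - 1) := by
  intro μ hμ
  obtain ⟨k, hk, hball⟩ :=
    G.exists_abs_sub_degree_le_of_hasEigenvalue_lapMatrix_submatrix (· ≠ istar) hμ
  have hcard : (#{w ∈ G.neighborFinset k | w ≠ istar} : ℝ) + 1 = G.degree k := by
    exact_mod_cast G.card_filter_neighborFinset_ne_add_one (hstar k hk).symm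
  have hdeg : (G.degree k : ℝ) ≤ Δmax := by exact_mod_cast hΔub k hk
  rw [abs_le] at hball
  constructor <;> linarith [hball.1, hball.2]

theorem reduced_laplacian_eigenvalue_bounds
    {V : Type*} [Fintype V] [DecidableEq V]
    (G : SimpleGraph V) [DecidableRel G.Adj]
    (hconn : G.Connected)
    (istar : V) (hstar : ∀ v : V, v ≠ istar → G.Adj istar v)
    (Δmax : ℕ)
    (hΔub : ∀ v : V, v ≠ istar → G.degree v ≤ Δmax)
    (hΔmem : ∃ v : V, v ≠ istar ∧ G.degree v = Δmax) :
    ∀ μ : ℝ,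
      Module.End.HasEigenvalue
        (Matrix.toLin'
          ((G.lapMatrix ℝ).submatrix
            (fun v : {v : V // v ≠ istar} => (v : V))
            (fun v : {v : V // v ≠ istar} => (v : V)))) μ →
      μ ∈ Set.Icc (1 : ℝ) (2 * (Δmax : ℝ) - 1) :=
  reduced_laplacian_eigenvalue_bounds_general G istar hstar Δmax hΔub
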